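/- arXiv:2212.01145 — 5 statements merged into one kernel-verified Lean document; each statement's English description precedes it below -/
import Mathlib

section
/- Under the simplifying assumption that all posterior variances are equal, σᵢ² = σ̄² for all i, the minimum over (μ', σ') of Σᵢ D_KL(N(μᵢ, σ̄²) ‖ N(μ', σ'²)) equals ξ = (n/2)·log(1 + (1/(n·σ̄²))·Σᵢ (μᵢ - μ̄)²), where μ̄ = (1/n)Σᵢ μᵢ. -/
open Real Finset

/-- Closed-form KL divergence between univariate Gaussians N(μ₁,σ₁²) and N(μ₂,σ₂²). -/
noncomputable def klGauss (μ₁ σ₁ μ₂ σ₂ : ℝ) : ℝ :=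
  Real.log (σ₂ / σ₁) + (σ₁^2 + (μ₁ - μ₂)^2) / (2 * σ₂^2) - 1/2

/-!
The summed divergence is, up to the constant `n · log (τ / σ̄)`, the divergence of the single
Gaussian `N(μ̄, τ²)` from the prior, where `τ² = σ̄² + (1/n) Σᵢ (μᵢ - μ̄)²` matches the first two
moments of the mixture of the posteriors. Gaussian divergences are nonnegative and vanish on the
diagonal, so the minimum is that constant, attained at the prior `N(μ̄, τ²)`.
-/

theorem klGauss_self (μ : ℝ) {σ : ℝ} (hσ : σ ≠ 0) : klGauss μ σ μ σ = 0 := by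
  rw [klGauss, div_self hσ, log_one, sub_self]
  field_simp
  ring

theorem klGauss_nonneg (μ₁ μ₂ : ℝ) {σ₁ σ₂ : ℝ} (hσ₁ : σ₁ ≠ 0) (hσ₂ : σ₂ ≠ 0) :
    0 ≤ klGauss μ₁ σ₁ μ₂ σ₂ := by
  have hlog : Real.log ((σ₁ / σ₂) ^ 2) ≤ (σ₁ / σ₂) ^ 2 - 1 :=
    log_le_sub_one_of_pos (by positivity)
  rw [Real.log_pow, div_pow] at hlog
  have hflip : Real.log (σ₂ / σ₁) = -Real.log (σ₁ / σ₂) := by rw [← log_inv, inv_div]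
  have hsplit : (σ₁ ^ 2 + (μ₁ - μ₂) ^ 2) / (2 * σ₂ ^ 2)
      = σ₁ ^ 2 / σ₂ ^ 2 / 2 + (μ₁ - μ₂) ^ 2 / (2 * σ₂ ^ 2) := by
    field_simp
  have hgap : 0 ≤ (μ₁ - μ₂) ^ 2 / (2 * σ₂ ^ 2) := by positivity
  rw [klGauss, hflip, hsplit]
  push_cast at hlog
  linarith

theorem Finset.sum_sub_sq_eq_sum_sub_mean_sq_add {ι : Type*} (s : Finset ι) (x : ι → ℝ)
    {m : ℝ} (hm : ∑ i ∈ s, x i = #s * m) (c : ℝ) :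
    ∑ i ∈ s, (x i - c) ^ 2 = ∑ i ∈ s, (x i - m) ^ 2 + #s * (m - c) ^ 2 := by
  have hcentered : ∑ i ∈ s, (x i - m) = 0 := by simp [sum_sub_distrib, hm]
  have hexpand : ∀ i, (x i - c) ^ 2 = (x i - m) ^ 2 + 2 * (m - c) * (x i - m) + (m - c) ^ 2 :=
    fun i => by ring
  simp only [hexpand, sum_add_distrib, ← mul_sum, hcentered, sum_const, nsmul_eq_mul]
  ring

theorem sum_klGauss_eq_card_mul {ι : Type*} (s : Finset ι) (x : ι → ℝ) {m σ τ μ' σ' : ℝ}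
    (hσ : σ ≠ 0) (hτ : τ ≠ 0) (hσ' : σ' ≠ 0) (hm : ∑ i ∈ s, x i = #s * m)
    (hτsq : #s * τ ^ 2 = #s * σ ^ 2 + ∑ i ∈ s, (x i - m) ^ 2) :
    ∑ i ∈ s, klGauss (x i) σ μ' σ' = #s * (klGauss m τ μ' σ' + Real.log (τ / σ)) := by
  have hsq := s.sum_sub_sq_eq_sum_sub_mean_sq_add x hm μ'
  have hlog : Real.log (σ' / σ) = Real.log (σ' / τ) + Real.log (τ / σ) := by
    rw [log_div hσ' hσ, log_div hσ' hτ, log_div hτ hσ]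
    ring
  simp only [klGauss, sum_sub_distrib, sum_add_distrib, ← sum_div, sum_const, nsmul_eq_mul,
    hsq, hlog]
  rw [← add_assoc, ← hτsq]
  ring

/-- with equal posterior variances σ̄², the minimum over priors (μ',σ')
of the summed KL divergence equals ξ = (n/2)·log(1 + (1/(nσ̄²))Σᵢ(μᵢ-μ̄)²). -/
theorem kl_sum_min_value (n : ℕ) (hn : 1 ≤ n) (μ : Fin n → ℝ) (σbar : ℝ) (hσ : 0 < σbar) :
    let μbar : ℝ := (1 / n) * ∑ i, μ i
    let ξ : ℝ := ((n : ℝ) / 2) * Real.log (1 + (1 / (n * σbar^2)) * ∑ i, (μ i - μbar)^2)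
    IsLeast {v : ℝ | ∃ μ' σ' : ℝ, 0 < σ' ∧
      v = ∑ i, klGauss (μ i) σbar μ' σ'} ξ := by
  intro μbar ξ
  have hn0 : (n : ℝ) ≠ 0 := by positivity
  set q := 1 + (1 / (n * σbar ^ 2)) * ∑ i, (μ i - μbar) ^ 2
  have hq : 0 < q := by positivity
  set τ := σbar * √q
  have hτ : 0 < τ := by positivity
  have hξ : ξ = n * Real.log (τ / σbar) := by
    rw [mul_div_cancel_left₀ _ hσ.ne', log_sqrt hq.le]
    ring
  have hdecomp : ∀ μ' σ' : ℝ, 0 < σ' →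
      ∑ i, klGauss (μ i) σbar μ' σ' = n * (klGauss μbar τ μ' σ' + Real.log (τ / σbar)) := by
    intro μ' σ' hσ'
    simpa using sum_klGauss_eq_card_mul univ μ hσ.ne' hτ.ne' hσ'.ne'
      (by rw [card_univ, Fintype.card_fin, ← mul_assoc, mul_one_div_cancel hn0, one_mul])
      (by simp only [τ, q, card_univ, Fintype.card_fin, mul_pow, sq_sqrt hq.le]; field_simp)
  refine ⟨⟨μbar, τ, hτ, by rw [hdecomp μbar τ hτ, klGauss_self μbar hτ.ne', zero_add, hξ]⟩, ?_⟩
  rintro _ ⟨μ', σ', hσ', rfl⟩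
  rw [hdecomp μ' σ' hσ', hξ]
  gcongr
  exact le_add_of_nonneg_left (klGauss_nonneg μbar μ' hτ.ne' hσ'.ne')
end

section
/- If μᵢ ≥ 0 for all i, then ξ = (n/2)·log(1 + (1/(n·σ̄²))·Σᵢ (μᵢ - μ̄)²) ≤ η = (n/2)·log(1 + (n-1)·(μ̄/σ̄)²). -/
open Real Finset

/-!
For nonnegative data the sum of squares is at most the square of the sum, so the centred sum of
squares `∑ (μᵢ - μ̄)² = ∑ μᵢ² - n μ̄²` is at most `(n μ̄)² - n μ̄² = n (n - 1) μ̄²`. Dividing by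
`n σ̄²` bounds the argument of the logarithm in `ξ` by that in `η`, and `log` is monotone.
-/

namespace Finset

variable {ι : Type*}

theorem sum_sq_sub_mean (s : Finset ι) (x : ι → ℝ) :
    ∑ i ∈ s, (x i - (1 / #s) * ∑ j ∈ s, x j) ^ 2
      = ∑ i ∈ s, x i ^ 2 - (1 / #s) * (∑ i ∈ s, x i) ^ 2 := by
  have hcard : (#s : ℝ) * (1 / #s) ^ 2 = 1 / #s := by
    rcases eq_or_ne (#s : ℝ) 0 with h | h
    · simp [h]
    · field_simp
  simp only [sub_sq, sum_add_distrib, sum_sub_distrib, ← sum_mul, ← mul_sum, sum_const,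
    nsmul_eq_mul]
  linear_combination (∑ i ∈ s, x i) ^ 2 * hcard

theorem inv_card_mul_sum_sq_sub_mean_le {x : ι → ℝ} (s : Finset ι) (hx : ∀ i ∈ s, 0 ≤ x i) :
    (1 / #s) * ∑ i ∈ s, (x i - (1 / #s) * ∑ j ∈ s, x j) ^ 2
      ≤ (#s - 1) * ((1 / #s) * ∑ j ∈ s, x j) ^ 2 := by
  rcases s.eq_empty_or_nonempty with rfl | hs
  · simp
  have hcard : (#s : ℝ) ≠ 0 := by exact_mod_cast hs.card_pos.ne'
  rw [sum_sq_sub_mean]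
  calc (1 / #s) * (∑ i ∈ s, x i ^ 2 - (1 / #s) * (∑ i ∈ s, x i) ^ 2)
      ≤ (1 / #s) * ((∑ i ∈ s, x i) ^ 2 - (1 / #s) * (∑ i ∈ s, x i) ^ 2) := by
        gcongr
        exact sum_sq_le_sq_sum_of_nonneg hx
    _ = (#s - 1) * ((1 / #s) * ∑ j ∈ s, x j) ^ 2 := by
        field_simp

end Finset

theorem xi_le_eta_general (n : ℕ) (μ : Fin n → ℝ) (hμ : ∀ i, 0 ≤ μ i)
    (σbar : ℝ) :
    let μbar : ℝ := (1 / n) * ∑ i, μ i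
    let ξ : ℝ := ((n : ℝ) / 2) * Real.log (1 + (1 / (n * σbar^2)) * ∑ i, (μ i - μbar)^2)
    let η : ℝ := ((n : ℝ) / 2) * Real.log (1 + ((n : ℝ) - 1) * (μbar / σbar)^2)
    ξ ≤ η := by
  intro μbar ξ η
  have hvar := inv_card_mul_sum_sq_sub_mean_le univ fun i _ ↦ hμ i
  rw [card_univ, Fintype.card_fin] at hvar
  have harg : (1 / (n * σbar ^ 2)) * ∑ i, (μ i - μbar) ^ 2 ≤ ((n : ℝ) - 1) * (μbar / σbar) ^ 2 :=
    calc (1 / (n * σbar ^ 2)) * ∑ i, (μ i - μbar) ^ 2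
        = ((1 / n) * ∑ i, (μ i - μbar) ^ 2) / σbar ^ 2 := by ring
      _ ≤ ((n - 1) * μbar ^ 2) / σbar ^ 2 := div_le_div_of_nonneg_right hvar (sq_nonneg _)
      _ = ((n : ℝ) - 1) * (μbar / σbar) ^ 2 := by ring
  have hpos : 0 < 1 + (1 / (n * σbar ^ 2)) * ∑ i, (μ i - μbar) ^ 2 := by positivity
  exact mul_le_mul_of_nonneg_left (log_le_log hpos (add_le_add_right harg 1)) (by positivity)

/-- Proposition 1: if all μᵢ ≥ 0 then
ξ = (n/2)·log(1 + (1/(nσ̄²))Σᵢ(μᵢ-μ̄)²) ≤ η = (n/2)·log(1 + (n-1)(μ̄/σ̄)²). -/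
theorem xi_le_eta (n : ℕ) (hn : 1 ≤ n) (μ : Fin n → ℝ) (hμ : ∀ i, 0 ≤ μ i)
    (σbar : ℝ) (hσ : 0 < σbar) :
    let μbar : ℝ := (1 / n) * ∑ i, μ i
    let ξ : ℝ := ((n : ℝ) / 2) * Real.log (1 + (1 / (n * σbar^2)) * ∑ i, (μ i - μbar)^2)
    let η : ℝ := ((n : ℝ) / 2) * Real.log (1 + ((n : ℝ) - 1) * (μbar / σbar)^2)
    ξ ≤ η :=
  xi_le_eta_general n μ hμ σbar
end

section
/- With common posterior variance σ̄², the minimizing prior from Theorem 1 has variance σ'² = σ̄² + V where V = (1/n)Σᵢ (μᵢ - μ̄)², and at this optimum each individual KL term equals D_KL(N(μᵢ, σ̄²)‖N(μ̄, σ̄²+V)) = (1/2)log(1 + V/σ̄²) + ((μᵢ-μ̄)² - V)/(2(σ̄²+V)). -/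
open Real Finset

/-- at the optimal prior N(μ̄, σ̄²+V) with V = (1/n)Σᵢ(μᵢ-μ̄)²,
each KL term equals (1/2)log(1+V/σ̄²) + ((μᵢ-μ̄)² - V)/(2(σ̄²+V)). -/
theorem kl_term_at_optimum (n : ℕ) (hn : 1 ≤ n) (μ : Fin n → ℝ) (σbar : ℝ) (hσ : 0 < σbar) :
    let μbar : ℝ := (1 / n) * ∑ i, μ i
    let V : ℝ := (1 / n) * ∑ i, (μ i - μbar)^2
    ∀ i, klGauss (μ i) σbar μbar (Real.sqrt (σbar^2 + V))
        = (1/2) * Real.log (1 + V / σbar^2) + ((μ i - μbar)^2 - V) / (2 * (σbar^2 + V)) := by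
  intro μbar V i
  have hV : 0 ≤ V := by
    apply mul_nonneg
    · positivity
    · exact Finset.sum_nonneg fun j _ => sq_nonneg _
  have hs : 0 < σbar^2 + V := by positivity
  have hsqrt : Real.sqrt (σbar^2 + V) ^ 2 = σbar^2 + V := Real.sq_sqrt hs.le
  have hlog : Real.log (Real.sqrt (σbar^2 + V) / σbar)
      = (1/2) * Real.log (1 + V / σbar^2) := by
    have h1 : (1 : ℝ) + V / σbar^2 = (σbar^2 + V) / σbar^2 := by
      field_simp
    rw [h1, Real.log_div (ne_of_gt (Real.sqrt_pos.mpr hs)) hσ.ne',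
      Real.log_div hs.ne' (by positivity), Real.log_sqrt hs.le, Real.log_pow]
    ring
  rw [klGauss, hsqrt, hlog]
  have h2 : (σbar^2 + (μ i - μbar)^2) / (2 * (σbar^2 + V)) - 1/2
      = ((μ i - μbar)^2 - V) / (2 * (σbar^2 + V)) := by
    field_simp
    ring
  linarith [h2]
end

section
/- For any prior N(μ', σ'²), the sum Σᵢ D_KL(N(μᵢ, σ̄²) ‖ N(μ', σ'²)) is bounded below by (n/2)·log(1 + V/σ̄²), where V = (1/n)Σᵢ (μᵢ - μ̄)² and μ̄ = (1/n)Σᵢ μᵢ. -/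
open Real Finset

/-- for any prior N(μ',σ'²), the summed KL divergence from the posteriors
N(μᵢ,σ̄²) is at least (n/2)·log(1 + V/σ̄²), where V = (1/n)Σᵢ(μᵢ-μ̄)². -/
theorem kl_sum_lower_bound (n : ℕ) (hn : 1 ≤ n) (μ : Fin n → ℝ) (σbar : ℝ) (hσ : 0 < σbar)
    (μ' σ' : ℝ) (hσ' : 0 < σ') :
    let μbar : ℝ := (1 / n) * ∑ i, μ i
    let V : ℝ := (1 / n) * ∑ i, (μ i - μbar)^2
    ((n : ℝ) / 2) * Real.log (1 + V / σbar^2) ≤ ∑ i, klGauss (μ i) σbar μ' σ' := by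
  intro μbar V
  have hn' : (0:ℝ) < n := by exact_mod_cast hn
  have hV : 0 ≤ V := by
    apply mul_nonneg (by positivity)
    exact Finset.sum_nonneg fun i _ => sq_nonneg _
  have ha : 0 < σbar^2 + V := by positivity
  have hs : (0:ℝ) < σ'^2 := by positivity
  -- S = n * μbar
  have hS : ∑ i, μ i = n * μbar := by
    simp only [μbar]; field_simp
  have hnV : (n:ℝ) * V = ∑ i, (μ i - μbar)^2 := by
    simp only [V]; field_simp
  -- ∑ (μ i - μ')² ≥ n * V
  have hsum : (n:ℝ) * V ≤ ∑ i, (μ i - μ')^2 := by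
    have e1 : ∑ i, (μ i - μ')^2
        = ∑ i, (μ i - μbar)^2 + (n:ℝ) * (μbar - μ')^2 := by
      have : ∀ i : Fin n, (μ i - μ')^2
          = (μ i - μbar)^2 + (2*(μbar - μ')) * μ i + ((μ'-μbar)*(μ'+μbar)) := by
        intro i; ring
      rw [Finset.sum_congr rfl fun i _ => this i, Finset.sum_add_distrib,
        Finset.sum_add_distrib, ← Finset.mul_sum, Finset.sum_const,
        Finset.card_fin, hS]
      push_cast
      ring
    rw [e1, hnV]
    nlinarith [sq_nonneg (μbar - μ')]
  -- closed form for the sum of KL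
  have hKL : ∑ i, klGauss (μ i) σbar μ' σ'
      = (n:ℝ) * Real.log (σ'/σbar)
        + ((n:ℝ)*σbar^2 + ∑ i, (μ i - μ')^2)/(2*σ'^2) - (n:ℝ)/2 := by
    simp only [klGauss]
    rw [Finset.sum_sub_distrib, Finset.sum_add_distrib, Finset.sum_const,
      Finset.sum_const, Finset.card_fin, ← Finset.sum_div, Finset.sum_add_distrib,
      Finset.sum_const, Finset.card_fin]
    push_cast
    ring
  rw [hKL]
  -- log identities
  have hlog1 : Real.log (1 + V / σbar^2) = Real.log (σbar^2 + V) - 2 * Real.log σbar := by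
    have : 1 + V / σbar^2 = (σbar^2 + V) / σbar^2 := by field_simp
    rw [this, Real.log_div (ne_of_gt ha) (by positivity), Real.log_pow]
    push_cast; ring
  have hlog2 : Real.log (σ'/σbar) = Real.log σ' - Real.log σbar :=
    Real.log_div (ne_of_gt hσ') (ne_of_gt hσ)
  have hkey : Real.log ((σbar^2 + V) / σ'^2) ≤ (σbar^2 + V) / σ'^2 - 1 :=
    Real.log_le_sub_one_of_pos (by positivity)
  have hkey2 : Real.log (σbar^2 + V) - 2 * Real.log σ' ≤ (σbar^2 + V) / σ'^2 - 1 := by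
    rw [Real.log_div (ne_of_gt ha) (ne_of_gt hs), Real.log_pow] at hkey
    push_cast at hkey
    linarith
  have hmono : ((n:ℝ)*σbar^2 + (n:ℝ)*V)/(2*σ'^2)
      ≤ ((n:ℝ)*σbar^2 + ∑ i, (μ i - μ')^2)/(2*σ'^2) := by
    gcongr
  have h3 : ((n:ℝ)*σbar^2 + (n:ℝ)*V)/(2*σ'^2) = ((n:ℝ)/2) * ((σbar^2+V)/σ'^2) := by
    field_simp
  have hmul := mul_le_mul_of_nonneg_left hkey2 (by positivity : (0:ℝ) ≤ (n:ℝ)/2)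
  rw [hlog1, hlog2]
  nlinarith [hmul, hmono, h3]
end

section
/- If all μᵢ ≥ 0 and σ̄ > 0 then ξ ≤ (n/2)·log n + n·log(1 + μ̄/σ̄), i.e., the extreme minimum of the total KL divergence grows at most logarithmically in n for bounded mean-to-deviation ratio. -/
open Real Finset

/-!
For nonnegative data the centred sum of squares is at most the uncentred one, which is at most the
square of the sum, `(n μ̄)²`. Hence the argument of the logarithm is at most
`1 + n (μ̄/σ̄)² ≤ n (1 + μ̄/σ̄)²`, and taking logarithms gives the bound.
-/

lemma Finset.sum_sub_mean_sq_le_sum_sq {ι : Type*} (s : Finset ι) (f : ι → ℝ) :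
    ∑ i ∈ s, (f i - (1 / #s) * ∑ j ∈ s, f j) ^ 2 ≤ ∑ i ∈ s, f i ^ 2 := by
  rcases s.eq_empty_or_nonempty with rfl | hs
  · simp
  have hcard : (#s : ℝ) ≠ 0 := by exact_mod_cast hs.card_pos.ne'
  have hexpand (m : ℝ) : ∑ i ∈ s, (f i - m) ^ 2
      = ∑ i ∈ s, f i ^ 2 - 2 * m * ∑ i ∈ s, f i + #s * m ^ 2 := by
    simp only [sub_sq, sum_add_distrib, sum_sub_distrib, ← sum_mul, ← mul_sum, sum_const,
      nsmul_eq_mul]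
    ring
  have hdefect : 2 * ((1 / #s) * ∑ j ∈ s, f j) * ∑ i ∈ s, f i
      - #s * ((1 / #s) * ∑ j ∈ s, f j) ^ 2 = (∑ i ∈ s, f i) ^ 2 / #s := by
    field_simp
    ring
  have : 0 ≤ (∑ i ∈ s, f i) ^ 2 / #s := by positivity
  linarith [hexpand ((1 / #s) * ∑ j ∈ s, f j)]

lemma Real.log_one_add_mul_sq_le {n x : ℝ} (hn : 1 ≤ n) (hx : 0 ≤ x) :
    log (1 + n * x ^ 2) ≤ log n + 2 * log (1 + x) := by
  calc log (1 + n * x ^ 2) ≤ log (n * (1 + x) ^ 2) :=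
        log_le_log (by positivity) (by nlinarith)
    _ = log n + 2 * log (1 + x) := by
        rw [log_mul (by positivity) (by positivity), log_pow]
        push_cast
        ring

theorem xi_log_growth_general (n : ℕ) (μ : Fin n → ℝ) (hμ : ∀ i, 0 ≤ μ i)
    (σbar : ℝ) (hσ : 0 < σbar) :
    let μbar : ℝ := (1 / n) * ∑ i, μ i
    let ξ : ℝ := ((n : ℝ) / 2) * Real.log (1 + (1 / (n * σbar^2)) * ∑ i, (μ i - μbar)^2)
    ξ ≤ ((n : ℝ) / 2) * Real.log n + (n : ℝ) * Real.log (1 + μbar / σbar) := by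
  intro μbar ξ
  rcases n.eq_zero_or_pos with rfl | hn
  · simp [ξ]
  have hμbar : 0 ≤ μbar := mul_nonneg (by positivity) (sum_nonneg fun i _ ↦ hμ i)
  have hvar : ∑ i, (μ i - μbar) ^ 2 ≤ (n * μbar) ^ 2 :=
    calc ∑ i, (μ i - μbar) ^ 2 ≤ ∑ i, μ i ^ 2 := by
          have := sum_sub_mean_sq_le_sum_sq univ μ
          rwa [card_univ, Fintype.card_fin] at this
      _ ≤ (∑ i, μ i) ^ 2 := sum_sq_le_sq_sum_of_nonneg fun i _ ↦ hμ i
      _ = (n * μbar) ^ 2 := by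
          simp only [μbar]
          field_simp
  have harg :
      1 + (1 / (n * σbar ^ 2)) * ∑ i, (μ i - μbar) ^ 2 ≤ 1 + n * (μbar / σbar) ^ 2 :=
    calc 1 + (1 / (n * σbar ^ 2)) * ∑ i, (μ i - μbar) ^ 2
        ≤ 1 + (1 / (n * σbar ^ 2)) * (n * μbar) ^ 2 := by gcongr
      _ = 1 + n * (μbar / σbar) ^ 2 := by field_simp
  calc ξ ≤ (n / 2) * log (1 + n * (μbar / σbar) ^ 2) := by
          dsimp only [ξ]
          gcongr
    _ ≤ (n / 2) * (log n + 2 * log (1 + μbar / σbar)) := by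
        gcongr
        exact log_one_add_mul_sq_le (by exact_mod_cast hn) (by positivity)
    _ = (n / 2) * log n + n * log (1 + μbar / σbar) := by ring

/-- if all μᵢ ≥ 0 and σ̄ > 0 then
ξ = (n/2)·log(1 + (1/(nσ̄²))Σᵢ(μᵢ-μ̄)²) ≤ (n/2)·log n + n·log(1 + μ̄/σ̄). -/
theorem xi_log_growth (n : ℕ) (hn : 1 ≤ n) (μ : Fin n → ℝ) (hμ : ∀ i, 0 ≤ μ i)
    (σbar : ℝ) (hσ : 0 < σbar) :
    let μbar : ℝ := (1 / n) * ∑ i, μ i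
    let ξ : ℝ := ((n : ℝ) / 2) * Real.log (1 + (1 / (n * σbar^2)) * ∑ i, (μ i - μbar)^2)
    ξ ≤ ((n : ℝ) / 2) * Real.log n + (n : ℝ) * Real.log (1 + μbar / σbar) :=
  xi_log_growth_general n μ hμ σbar hσ
end
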